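/- arXiv:2302.09681 — 4 statements merged into one kernel-verified Lean document; each statement's English description precedes it below -/
import Mathlib

section
/- Suppose m : (0,∞) → ℝ satisfies m(c) < 0 for all c > 0 and m(k²c) < k²·m(c) for all c > 0 and k > 1. Then m is strictly subadditive: for all c₁, c₂ > 0, m(c₁ + c₂) < m(c₁) + m(c₂). -/
/-! Applying the hypothesis with `k = √(b/a)` shows that `m c / c` is strictly decreasing on
`(0, ∞)`. With `s = c₁ + c₂`, write `m s = c₁ · (m s / s) + c₂ · (m s / s)` and compare each term
with `c_i · (m c_i / c_i) = m c_i`. -/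

open Set

theorem strictAntiOn_div_self_of_sq_mul_lt {m : ℝ → ℝ}
    (hsub : ∀ c > (0:ℝ), ∀ k > (1:ℝ), m (k^2 * c) < k^2 * m c) :
    StrictAntiOn (fun c => m c / c) (Ioi 0) := by
  intro a (ha : 0 < a) b (hb : 0 < b) hab
  have hk : 1 < √(b / a) := Real.lt_sqrt_of_sq_lt (by rw [one_pow, one_lt_div ha]; exact hab)
  have hsq : √(b / a) ^ 2 = b / a := Real.sq_sqrt (by positivity)
  have hmb : m b < b / a * m a := by
    simpa only [hsq, div_mul_cancel₀ b ha.ne'] using hsub a ha _ hk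
  show m b / b < m a / a
  rw [div_lt_div_iff₀ hb ha]
  calc m b * a < b / a * m a * a := mul_lt_mul_of_pos_right hmb ha
    _ = m a * b := by field_simp

theorem add_lt_add_of_strictAntiOn_div_self {f : ℝ → ℝ}
    (hf : StrictAntiOn (fun c => f c / c) (Ioi 0)) {x y : ℝ} (hx : 0 < x) (hy : 0 < y) :
    f (x + y) < f x + f y := by
  have hxy : 0 < x + y := add_pos hx hy
  have hlt_x : f (x + y) / (x + y) < f x / x := hf hx hxy (lt_add_of_pos_right x hy)
  have hlt_y : f (x + y) / (x + y) < f y / y := hf hy hxy (lt_add_of_pos_left y hx)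
  calc f (x + y) = x * (f (x + y) / (x + y)) + y * (f (x + y) / (x + y)) := by
        field_simp
    _ < x * (f x / x) + y * (f y / y) := by gcongr
    _ = f x + f y := by field_simp

theorem stmt1_general (m : ℝ → ℝ)
    (hsub : ∀ c > (0:ℝ), ∀ k > (1:ℝ), m (k^2 * c) < k^2 * m c) :
    ∀ c₁ > (0:ℝ), ∀ c₂ > (0:ℝ), m (c₁ + c₂) < m c₁ + m c₂ :=
  fun _ h₁ _ h₂ => add_lt_add_of_strictAntiOn_div_self (strictAntiOn_div_self_of_sq_mul_lt hsub) h₁ h₂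

/-- if m(c) < 0 for all c > 0 and m(k²c) < k²m(c) for all k > 1,
then m is strictly subadditive. -/
theorem stmt1 (m : ℝ → ℝ)
    (hneg : ∀ c > (0:ℝ), m c < 0)
    (hsub : ∀ c > (0:ℝ), ∀ k > (1:ℝ), m (k^2 * c) < k^2 * m c) :
    ∀ c₁ > (0:ℝ), ∀ c₂ > (0:ℝ), m (c₁ + c₂) < m c₁ + m c₂ :=
  stmt1_general m hsub
end

section
/- Let u : (0,∞) → ℝ with u > 0 everywhere, and let v : (0,∞) → ℝ be continuous. Suppose there exists r₀ ∈ (0,∞) such that v(r) ≥ 0 for r ∈ (0, r₀) and v(r) < 0 for r ∈ (r₀, 1), and suppose the weight w(r) = r^{-k} u(r)^{p-2} (with p > 2, k > 0) is strictly decreasing in r, and ∫₀¹ u(r) v(r) rᴺ⁻¹ dr = 0 where the integral converges absolutely and v is not identically zero. Then ∫₀¹ r^{-k} u(r)^{p-1} v(r) rᴺ⁻¹ dr > 0. -/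
/-!
Write `f = u v r^{N-1}` and `w = r^{-k} u^{p-2}`, so that the integrand is `w f`. Since
`∫ f = 0`, the integral of `w f` equals that of `(w - w(r₀)) f`. Both factors change sign at
`r₀` in opposite directions, so this integrand is nonnegative on `(0, 1)` and strictly positive
on `(r₀, 1)`.
-/

open Set MeasureTheory

theorem setIntegral_mul_eq_setIntegral_sub_mul_of_setIntegral_eq_zero {α : Type*}
    [MeasurableSpace α] {μ : Measure α} {s : Set α} {f w : α → ℝ} (c : ℝ)
    (hf : IntegrableOn f s μ) (hwf : IntegrableOn (fun x => w x * f x) s μ)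
    (hzero : ∫ x in s, f x ∂μ = 0) :
    ∫ x in s, w x * f x ∂μ = ∫ x in s, (w x - c) * f x ∂μ := by
  simp_rw [sub_mul]
  rw [integral_sub hwf (hf.const_mul c), integral_const_mul, hzero, mul_zero, sub_zero]

theorem setIntegral_Ioo_pos_of_nonneg_of_pos_on_Ioo {g : ℝ → ℝ} {a b c : ℝ} (hcb : c < b)
    (hac : a ≤ c) (hg : IntegrableOn g (Ioo a b)) (hg_nonneg : ∀ x ∈ Ioo a b, 0 ≤ g x)
    (hg_pos : ∀ x ∈ Ioo c b, 0 < g x) :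
    0 < ∫ x in Ioo a b, g x := by
  rw [setIntegral_pos_iff_support_of_nonneg_ae
    ((ae_restrict_iff' measurableSet_Ioo).mpr (.of_forall hg_nonneg)) hg]
  have hsub : Ioo c b ⊆ Function.support g ∩ Ioo a b := fun x hx =>
    ⟨(hg_pos x hx).ne', Ioo_subset_Ioo_left hac hx⟩
  refine lt_of_lt_of_le ?_ (measure_mono hsub)
  rw [Real.volume_Ioo]
  exact ENNReal.ofReal_pos.mpr (sub_pos.mpr hcb)

theorem setIntegral_mul_pos_of_strictAntiOn_of_sign_change {f w : ℝ → ℝ} {a b r₀ : ℝ}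
    (hr₀ : r₀ ∈ Ioo a b) (hw : StrictAntiOn w (Ioo a b))
    (hf_nonneg : ∀ r ∈ Ioo a r₀, 0 ≤ f r) (hf_neg : ∀ r ∈ Ioo r₀ b, f r < 0)
    (hf : IntegrableOn f (Ioo a b)) (hwf : IntegrableOn (fun r => w r * f r) (Ioo a b))
    (hzero : ∫ r in Ioo a b, f r = 0) :
    0 < ∫ r in Ioo a b, w r * f r := by
  have hpos : ∀ r ∈ Ioo r₀ b, 0 < (w r - w r₀) * f r := fun r hr =>
    mul_pos_of_neg_of_neg (sub_neg.mpr (hw hr₀ ⟨hr₀.1.trans hr.1, hr.2⟩ hr.1)) (hf_neg r hr)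
  have hnonneg : ∀ r ∈ Ioo a b, 0 ≤ (w r - w r₀) * f r := by
    intro r hr
    rcases lt_trichotomy r r₀ with hlt | rfl | hgt
    · exact mul_nonneg (sub_nonneg.mpr (hw hr hr₀ hlt).le) (hf_nonneg r ⟨hr.1, hlt⟩)
    · simp
    · exact (hpos r ⟨hgt, hr.2⟩).le
  have hint : IntegrableOn (fun r => (w r - w r₀) * f r) (Ioo a b) := by
    simp_rw [sub_mul]
    exact hwf.sub (hf.const_mul _)
  rw [setIntegral_mul_eq_setIntegral_sub_mul_of_setIntegral_eq_zero (w r₀) hf hwf hzero]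
  exact setIntegral_Ioo_pos_of_nonneg_of_pos_on_Ioo hr₀.2 hr₀.1.le hint hnonneg hpos

theorem stmt5_general (u v : ℝ → ℝ) (N : ℕ) (p k : ℝ)
    (hu : ∀ r > (0:ℝ), 0 < u r)
    (r₀ : ℝ) (hr₀ : r₀ ∈ Ioo (0:ℝ) 1)
    (hv1 : ∀ r ∈ Ioo (0:ℝ) r₀, 0 ≤ v r)
    (hv2 : ∀ r ∈ Ioo r₀ (1:ℝ), v r < 0)
    (hw : StrictAntiOn (fun r => r ^ (-k) * u r ^ (p - 2)) (Ioi 0))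
    (hint : IntegrableOn (fun r => u r * v r * r ^ ((N:ℝ) - 1)) (Ioo 0 1))
    (hwint : IntegrableOn
      (fun r => r ^ (-k) * u r ^ (p - 1) * v r * r ^ ((N:ℝ) - 1)) (Ioo 0 1))
    (hzero : ∫ r in Ioo (0:ℝ) 1, u r * v r * r ^ ((N:ℝ) - 1) = 0) :
    0 < ∫ r in Ioo (0:ℝ) 1, r ^ (-k) * u r ^ (p - 1) * v r * r ^ ((N:ℝ) - 1) := by
  have hsplit : EqOn (fun r => r ^ (-k) * u r ^ (p - 1) * v r * r ^ ((N:ℝ) - 1))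
      (fun r => r ^ (-k) * u r ^ (p - 2) * (u r * v r * r ^ ((N:ℝ) - 1))) (Ioo 0 1) := by
    intro r hr
    have hpow : u r ^ (p - 1) = u r ^ (p - 2) * u r := by
      rw [← Real.rpow_add_one (hu r hr.1).ne']
      ring_nf
    simp only [hpow]
    ring
  have hu_rpow_pos : ∀ r ∈ Ioo (0:ℝ) 1, 0 < u r * r ^ ((N:ℝ) - 1) := fun r hr =>
    mul_pos (hu r hr.1) (Real.rpow_pos_of_pos hr.1 _)
  rw [setIntegral_congr_fun measurableSet_Ioo hsplit]
  refine setIntegral_mul_pos_of_strictAntiOn_of_sign_change hr₀ (hw.mono Ioo_subset_Ioi_self)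
    (fun r hr => ?_) (fun r hr => ?_) hint (hwint.congr_fun hsplit measurableSet_Ioo) hzero
  · have := hu_rpow_pos r ⟨hr.1, hr.2.trans hr₀.2⟩
    rw [mul_right_comm]
    exact mul_nonneg this.le (hv1 r hr)
  · have := hu_rpow_pos r ⟨hr₀.1.trans hr.1, hr.2⟩
    rw [mul_right_comm]
    exact mul_neg_of_pos_of_neg this (hv2 r hr)

/-- weighted integral comparison. If u > 0, v changes sign once
from + to − at r₀ ∈ (0,1), the weight w(r) = r^{-k} u(r)^{p-2} is strictly
decreasing, and ∫₀¹ u v r^{N-1} dr = 0 with v not identically zero, then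
∫₀¹ r^{-k} u^{p-1} v r^{N-1} dr > 0. -/
theorem stmt5 (u v : ℝ → ℝ) (N : ℕ) (p k : ℝ) (hN : 1 ≤ N)
    (hp : 2 < p) (hk : 0 < k)
    (hu : ∀ r > (0:ℝ), 0 < u r)
    (hv : ContinuousOn v (Ioo 0 1))
    (r₀ : ℝ) (hr₀ : r₀ ∈ Ioo (0:ℝ) 1)
    (hv1 : ∀ r ∈ Ioo (0:ℝ) r₀, 0 ≤ v r)
    (hv2 : ∀ r ∈ Ioo r₀ (1:ℝ), v r < 0)
    (hw : StrictAntiOn (fun r => r ^ (-k) * u r ^ (p - 2)) (Ioi 0))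
    (hint : IntegrableOn (fun r => u r * v r * r ^ ((N:ℝ) - 1)) (Ioo 0 1))
    (hwint : IntegrableOn
      (fun r => r ^ (-k) * u r ^ (p - 1) * v r * r ^ ((N:ℝ) - 1)) (Ioo 0 1))
    (hzero : ∫ r in Ioo (0:ℝ) 1, u r * v r * r ^ ((N:ℝ) - 1) = 0)
    (hnz : ∃ r ∈ Ioo (0:ℝ) 1, v r ≠ 0) :
    0 < ∫ r in Ioo (0:ℝ) 1, r ^ (-k) * u r ^ (p - 1) * v r * r ^ ((N:ℝ) - 1) :=
  stmt5_general u v N p k hu r₀ hr₀ hv1 hv2 hw hint hwint hzero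
end

section
/- Under hypothesis (h) with θ = lim r h'/h, if u solves the fractional equation with Lagrange multiplier λ and satisfies the combined Pohozaev–Nehari identity −2sλ∫|u|² = ∫((2N/p − (N−2s))h + (2/p)|x|h')|u|^p, and if |x|h'(|x|) ≥ θ h(|x|) and 2 < p < 2 + (2θ + 4s)/N, then λ < 0. -/
open MeasureTheory

/-!
The bound `r h'(r) ≥ θ h(r)` turns the right-hand side of the Pohozaev–Nehari identity into at
least `(2N/p - (N - 2s) + 2θ/p) ∫ h(|x|) |u|^p`, and subcriticality makes this coefficient
positive. Hence `-2sλ ∫ u² > 0`, which forces `λ < 0`.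
-/

lemma pohozaev_coeff_pos {N s p θ : ℝ} (hN : 0 < N) (hs : 0 ≤ s) (hp : 2 ≤ p)
    (hp' : p < 2 + (2 * θ + 4 * s) / N) :
    0 < 2 * N / p - (N - 2 * s) + 2 / p * θ := by
  have hp0 : 0 < p := by linarith
  have hsub : (p - 2) * N < 2 * θ + 4 * s := by
    rw [← lt_div_iff₀ hN]
    linarith
  have hscaled : 0 < (2 * N / p - (N - 2 * s) + 2 / p * θ) * p := by
    have hexpand :
        (2 * N / p - (N - 2 * s) + 2 / p * θ) * p = 2 * N - p * (N - 2 * s) + 2 * θ := by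
      field_simp
    nlinarith
  exact pos_of_mul_pos_left hscaled hp0.le

lemma integral_radial_weight_ge {E : Type*} [NormedAddCommGroup E] [MeasurableSpace E]
    {μ : Measure E} (h0 : μ {0} = 0) {h h' : ℝ → ℝ} {w : E → ℝ}
    {a b θ : ℝ} (hb : 0 ≤ b) (hw : ∀ x, 0 ≤ w x) (hθ : ∀ r > (0 : ℝ), r * h' r ≥ θ * h r)
    (hi : Integrable (fun x => h ‖x‖ * w x) μ) (hi' : Integrable (fun x => ‖x‖ * h' ‖x‖ * w x) μ) :
    (a + b * θ) * ∫ x, h ‖x‖ * w x ∂μ ≤ ∫ x, (a * h ‖x‖ + b * ‖x‖ * h' ‖x‖) * w x ∂μ := by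
  have hne : ∀ᵐ x ∂μ, x ≠ 0 := by simpa [ae_iff] using h0
  have hpoint : ∀ᵐ x ∂μ, (a + b * θ) * (h ‖x‖ * w x) ≤ (a * h ‖x‖ + b * ‖x‖ * h' ‖x‖) * w x := by
    filter_upwards [hne] with x hx
    have hθx := hθ ‖x‖ (norm_pos_iff.mpr hx)
    nlinarith [mul_le_mul_of_nonneg_left (mul_le_mul_of_nonneg_left hθx hb) (hw x)]
  have hi'' : Integrable (fun x => (a * h ‖x‖ + b * ‖x‖ * h' ‖x‖) * w x) μ :=
    ((hi.const_mul a).add (hi'.const_mul b)).congr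
      (.of_forall fun x => by simp only [Pi.add_apply]; ring)
  rw [← integral_const_mul]
  exact integral_mono_ae (hi.const_mul _) hi'' hpoint

theorem stmt10_general {n : ℕ} (hn : 0 < n)
    (u : EuclideanSpace ℝ (Fin n) → ℝ)
    (h h' : ℝ → ℝ) (s p lam θ : ℝ) (hs : 0 < s)
    (hθ : ∀ r > (0:ℝ), r * h' r ≥ θ * h r)
    (hp : 2 < p) (hp' : p < 2 + (2*θ + 4*s)/(n:ℝ))
    (hM : 0 < ∫ x, (u x)^2)
    (hInt1 : Integrable (fun x : EuclideanSpace ℝ (Fin n) => h ‖x‖ * |u x| ^ p))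
    (hInt2 : Integrable (fun x : EuclideanSpace ℝ (Fin n) => ‖x‖ * h' ‖x‖ * |u x| ^ p))
    (hP : 0 < ∫ x, h ‖x‖ * |u x| ^ p)
    (hid : (-2*s*lam) * ∫ x, (u x)^2 =
      ∫ x, ((2*(n:ℝ)/p - ((n:ℝ) - 2*s)) * h ‖x‖ + (2/p) * ‖x‖ * h' ‖x‖) * |u x| ^ p) :
    lam < 0 := by
  -- makes `volume` on `EuclideanSpace ℝ (Fin n)` atomless, so `{0}` is null
  have : Nonempty (Fin n) := ⟨⟨0, hn⟩⟩
  have hc := pohozaev_coeff_pos (Nat.cast_pos.mpr hn) hs.le hp.le hp'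
  have hle := integral_radial_weight_ge (measure_singleton 0) (a := 2 * (n : ℝ) / p - (n - 2 * s))
    (div_nonneg zero_le_two (by linarith : (0 : ℝ) ≤ p))
    (fun x => Real.rpow_nonneg (abs_nonneg (u x)) p) hθ hInt1 hInt2
  have hlhs : 0 < (-2 * s * lam) * ∫ x, (u x)^2 := hid ▸ (mul_pos hc hP).trans_le hle
  nlinarith [pos_of_mul_pos_left hlhs hM.le]

/-- under (h) with |x|h'(|x|) ≥ θh(|x|), h > 0, subcriticality
2 < p < 2 + (2θ+4s)/N, and the combined Pohozaev–Nehari identity, the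
Lagrange multiplier λ is negative. -/
theorem stmt10 {n : ℕ} (hn : 0 < n)
    (u : EuclideanSpace ℝ (Fin n) → ℝ)
    (h h' : ℝ → ℝ) (s p lam θ : ℝ) (hs : 0 < s)
    (hθ : ∀ r > (0:ℝ), r * h' r ≥ θ * h r)
    (hpos : ∀ r ≥ (0:ℝ), 0 < h r)
    (hp : 2 < p) (hp' : p < 2 + (2*θ + 4*s)/(n:ℝ))
    (hM : 0 < ∫ x, (u x)^2)
    (hInt1 : Integrable (fun x : EuclideanSpace ℝ (Fin n) => h ‖x‖ * |u x| ^ p))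
    (hInt2 : Integrable (fun x : EuclideanSpace ℝ (Fin n) => ‖x‖ * h' ‖x‖ * |u x| ^ p))
    (hP : 0 < ∫ x, h ‖x‖ * |u x| ^ p)
    (hid : (-2*s*lam) * ∫ x, (u x)^2 =
      ∫ x, ((2*(n:ℝ)/p - ((n:ℝ) - 2*s)) * h ‖x‖ + (2/p) * ‖x‖ * h' ‖x‖) * |u x| ^ p) :
    lam < 0 :=
  stmt10_general hn u h h' s p lam θ hs hθ hp hp' hM hInt1 hInt2 hP hid
end

section
/- Let E : H → ℝ be of the form E(u) = (1/2)‖Tu‖² − (1/p)G(u) with p > 2 and G(ku) = k^p G(u) for k > 0, ‖T(ku)‖² = k²‖Tu‖², and let Q(u) = (1/2)‖u‖²_{L²}, S_c = {u : Q(u) = c}, m(c) = inf_{S_c} E. If m(c) < 0 for all c > 0, then m(k²c) < k² m(c) for all k > 1 and c > 0. -/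
/-!
Scaling `u ↦ k • u` maps `S_c` onto `S_{k²c}` and multiplies the quadratic part by `k²` and
`G` by `k ^ p`. Since `k² < k ^ p` and the quadratic part is nonnegative, `E (k • u) ≤ k ^ p * E u`,
hence `m (k² c) ≤ k ^ p * m c`, and `k ^ p * m c < k² * m c` because `m c < 0`.
-/

open Set

namespace Real

/-- A negative infimum is a genuine one: `sInf` of an empty or unbounded set of reals is `0`. -/
theorem nonempty_of_sInf_neg {S : Set ℝ} (h : sInf S < 0) : S.Nonempty := by
  by_contra hS
  rw [not_nonempty_iff_eq_empty.mp hS, sInf_empty] at h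
  exact lt_irrefl 0 h

theorem bddBelow_of_sInf_neg {S : Set ℝ} (h : sInf S < 0) : BddBelow S := by
  by_contra hS
  rw [sInf_of_not_bddBelow hS] at h
  exact lt_irrefl 0 h

theorem sInf_le_mul_sInf {S T : Set ℝ} {a : ℝ} (ha : 0 ≤ a) (hS : S.Nonempty)
    (hT : BddBelow T) (h : ∀ s ∈ S, ∃ t ∈ T, t ≤ a * s) : sInf T ≤ a * sInf S := by
  rw [← smul_eq_mul, ← sInf_smul_of_nonneg ha]
  refine le_csInf (hS.smul_set) ?_
  rintro _ ⟨s, hs, rfl⟩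
  obtain ⟨t, ht, hts⟩ := h s hs
  exact (csInf_le hT ht).trans hts

theorem sq_lt_rpow_of_one_lt {k p : ℝ} (hk : 1 < k) (hp : 2 < p) : k ^ 2 < k ^ p := by
  rw [← rpow_two]
  exact rpow_lt_rpow_of_exponent_lt hk hp

end Real

theorem half_norm_sq_smul {H : Type*} [NormedAddCommGroup H] [NormedSpace ℝ H] (k : ℝ) (u : H) :
    (1 / 2) * ‖k • u‖ ^ 2 = k ^ 2 * ((1 / 2) * ‖u‖ ^ 2) := by
  rw [norm_smul, Real.norm_eq_abs, mul_pow, sq_abs]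
  ring

theorem half_sub_smul_le {H : Type*} [SMul ℝ H] {Tn G : H → ℝ} {p k : ℝ} (hkp : k ^ 2 ≤ k ^ p)
    {u : H} (hTk : Tn (k • u) = k ^ 2 * Tn u) (hGk : G (k • u) = k ^ p * G u) (hTu : 0 ≤ Tn u) :
    (1 / 2) * Tn (k • u) - (1 / p) * G (k • u) ≤ k ^ p * ((1 / 2) * Tn u - (1 / p) * G u) := by
  rw [hTk, hGk]
  nlinarith [mul_nonneg (sub_nonneg.mpr hkp) hTu]

theorem stmt11_general {H : Type*} [NormedAddCommGroup H] [InnerProductSpace ℝ H]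
    (Tn G : H → ℝ) (p : ℝ) (hp : 2 < p)
    (hT : ∀ k : ℝ, 0 < k → ∀ u, Tn (k • u) = k^2 * Tn u)
    (hTnonneg : ∀ u, 0 ≤ Tn u)
    (hG : ∀ k : ℝ, 0 < k → ∀ u, G (k • u) = k ^ p * G u)
    (E : H → ℝ) (hE : E = fun u => (1/2) * Tn u - (1/p) * G u)
    (m : ℝ → ℝ) (hm : m = fun c => sInf (E '' {u | (1/2) * ‖u‖^2 = c}))
    (hneg : ∀ c > (0:ℝ), m c < 0) :
    ∀ k > (1:ℝ), ∀ c > (0:ℝ), m (k^2 * c) < k^2 * m c := by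
  intro k hk c hc
  have hk0 : 0 < k := by linarith
  have hkp : k ^ 2 < k ^ p := Real.sq_lt_rpow_of_one_lt hk hp
  have hmc : m c < 0 := hneg c hc
  have hmkc : m (k ^ 2 * c) < 0 := hneg _ (by positivity)
  have hscale : m (k ^ 2 * c) ≤ k ^ p * m c := by
    subst hm
    refine Real.sInf_le_mul_sInf (by positivity) (Real.nonempty_of_sInf_neg hmc)
      (Real.bddBelow_of_sInf_neg hmkc) ?_
    rintro _ ⟨u, hu, rfl⟩
    refine ⟨E (k • u), ⟨k • u, ?_, rfl⟩, ?_⟩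
    · rw [mem_ofPred_eq, half_norm_sq_smul, hu]
    · subst hE
      exact half_sub_smul_le hkp.le (hT k hk0 u) (hG k hk0 u) (hTnonneg u)
  calc m (k ^ 2 * c) ≤ k ^ p * m c := hscale
    _ < k ^ 2 * m c := mul_lt_mul_of_neg_right hkp hmc

/-- abstract scaling lemma. E(u) = (1/2)‖Tu‖² − (1/p)G(u) with a
2-homogeneous quadratic part Tn and a p-homogeneous part G (p > 2),
Q(u) = (1/2)‖u‖², m(c) = inf over S_c of E. If m(c) < 0 for all c > 0, then
m(k²c) < k²m(c) for all k > 1, c > 0. -/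
theorem stmt11 {H : Type*} [NormedAddCommGroup H] [InnerProductSpace ℝ H]
    (Tn G : H → ℝ) (p : ℝ) (hp : 2 < p)
    (hT : ∀ k : ℝ, 0 < k → ∀ u, Tn (k • u) = k^2 * Tn u)
    (hTnonneg : ∀ u, 0 ≤ Tn u)
    (hG : ∀ k : ℝ, 0 < k → ∀ u, G (k • u) = k ^ p * G u)
    (E : H → ℝ) (hE : E = fun u => (1/2) * Tn u - (1/p) * G u)
    (m : ℝ → ℝ) (hm : m = fun c => sInf (E '' {u | (1/2) * ‖u‖^2 = c}))
    (hne : ∀ c > (0:ℝ), {u : H | (1/2) * ‖u‖^2 = c}.Nonempty)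
    (hneg : ∀ c > (0:ℝ), m c < 0) :
    ∀ k > (1:ℝ), ∀ c > (0:ℝ), m (k^2 * c) < k^2 * m c :=
  stmt11_general Tn G p hp hT hTnonneg hG E hE m hm hneg
end
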